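/- arXiv:2110.04905 — 2 statements merged into one kernel-verified Lean document; each statement's English description precedes it below -/
import Mathlib

section
/- Let K ⊂ ℂ be a Galois number field of degree d whose Galois group G = Gal(K/ℚ) is cyclic, generated by σ, and define Σ : K → (Fin d → ℂ) by Σ(α)(j) = σ^{−j}(α). Then the lattice Λ_K = Σ(𝓞_K) is simple cyclic — i.e. there exists x ∈ Λ_K with Λ_K = span_ℤ{x, ρ(x), …, ρ^{d−1}(x)} — if and only if K has a normal integral basis, i.e. there exists θ ∈ 𝓞_K such that σ⁰(θ), σ¹(θ), …, σ^{d−1}(θ) form a ℤ-basis of 𝓞_K. -/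
noncomputable section

open NumberField

/-- The rotation shift operator on `ℂ^d`: `ρ(c₁, …, c_d) = (c_d, c₁, …, c_{d-1})`. -/
def rotShiftC (d : ℕ) (c : Fin d → ℂ) : Fin d → ℂ :=
  fun i => c ((finRotate d).symm i)

/-- The embedding `Σ : K → ℂ^d`, `Σ(α)(j) = σ^{-j}(α)`, for a generator `σ` of the
Galois group of `K/ℚ`. -/
def embGen (K : IntermediateField ℚ ℂ) (d : ℕ) (σ : K ≃ₐ[ℚ] K) :
    K → (Fin d → ℂ) := fun α j => ((σ ^ (-(j : ℤ))) α : ℂ)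

/-- The lattice `Λ_K = Σ(𝓞_K) ⊆ ℂ^d`. -/
def latticeKgen (K : IntermediateField ℚ ℂ) (d : ℕ) (σ : K ≃ₐ[ℚ] K) :
    Set (Fin d → ℂ) :=
  embGen K d σ '' (Set.range (algebraMap (𝓞 K) K))

/-! ### Auxiliary lemmas -/

/-- `embGen` as an additive monoid hom. -/
def embGenHom (K : IntermediateField ℚ ℂ) (d : ℕ) (σ : K ≃ₐ[ℚ] K) :
    K →+ (Fin d → ℂ) where
  toFun := embGen K d σ
  map_zero' := by funext j; simp [embGen]
  map_add' a b := by funext j; simp [embGen]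

lemma embGen_injective (K : IntermediateField ℚ ℂ) (d : ℕ) (σ : K ≃ₐ[ℚ] K)
    (hd0 : 0 < d) : Function.Injective (embGen K d σ) := by
  intro a b h
  have h0 := congrFun h ⟨0, hd0⟩
  have hz : ((⟨0, hd0⟩ : Fin d) : ℤ) = 0 := rfl
  simp only [embGen, hz, neg_zero, zpow_zero, AlgEquiv.one_apply] at h0
  exact Subtype.coe_injective h0

lemma zpow_congr_of_pow_eq_one {G : Type*} [Group G] {g : G} {d : ℕ} (h : g ^ d = 1)
    {a b : ℤ} (hab : a ≡ b [ZMOD d]) : g ^ a = g ^ b := by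
  obtain ⟨k, hk⟩ := hab.dvd
  have hb : b = a + (d : ℤ) * k := by linarith
  rw [hb, zpow_add, zpow_mul, zpow_natCast, h, one_zpow, mul_one]

lemma finRotate_val_modEq {n : ℕ} (j : Fin (n + 1)) :
    ((finRotate (n + 1) j : Fin (n + 1)) : ℤ) ≡ (j : ℤ) + 1 [ZMOD (n + 1)] := by
  rw [finRotate_succ_apply]
  have : ((j + 1 : Fin (n + 1)) : ℕ) = ((j : ℕ) + 1) % (n + 1) := by
    rw [Fin.add_def]
    simp [Fin.val_one]
  rw [this]
  have : (((((j : ℕ) + 1) % (n + 1) : ℕ)) : ℤ) = ((j : ℤ) + 1) % ((n : ℤ) + 1) := by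
    push_cast [Int.natCast_mod]
    rfl
  rw [this]
  have := Int.emod_emod_of_dvd ((j : ℤ) + 1) (dvd_refl ((n : ℤ) + 1))
  unfold Int.ModEq
  rw [this]

lemma rot_embGen (K : IntermediateField ℚ ℂ) (d : ℕ) (σ : K ≃ₐ[ℚ] K)
    (hd0 : 0 < d) (h1 : σ ^ d = 1) (α : K) :
    rotShiftC d (embGen K d σ α) = embGen K d σ (σ α) := by
  obtain ⟨n, rfl⟩ : ∃ n, d = n + 1 := ⟨d - 1, by omega⟩
  funext i
  set j := (finRotate (n + 1)).symm i with hj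
  have hi : i = finRotate (n + 1) j := ((finRotate (n + 1)).apply_symm_apply i).symm
  show embGen K (n + 1) σ α j = embGen K (n + 1) σ (σ α) i
  rw [hi]
  show ((σ ^ (-(j : ℤ))) α : ℂ) = ((σ ^ (-((finRotate (n + 1) j : Fin (n + 1)) : ℤ))) (σ α) : ℂ)
  have key : σ ^ (-(j : ℤ)) = σ ^ (-((finRotate (n + 1) j : Fin (n + 1)) : ℤ)) * σ := by
    rw [← zpow_add_one]
    apply zpow_congr_of_pow_eq_one h1
    have h2 := (finRotate_val_modEq j).neg.add_right 1
    have : -((j : ℤ) + 1) + 1 = -(j : ℤ) := by ring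
    rw [this] at h2
    exact_mod_cast h2.symm
  rw [key]
  rfl

lemma rot_iter_embGen (K : IntermediateField ℚ ℂ) (d : ℕ) (σ : K ≃ₐ[ℚ] K)
    (hd0 : 0 < d) (h1 : σ ^ d = 1) (α : K) (k : ℕ) :
    (rotShiftC d)^[k] (embGen K d σ α) = embGen K d σ ((σ ^ k) α) := by
  induction k with
  | zero => simp
  | succ n ih =>
      rw [Function.iterate_succ_apply', ih, rot_embGen K d σ hd0 h1, pow_succ']
      rfl

lemma span_range_algebraMap_eq_top (K : IntermediateField ℚ ℂ) [NumberField K] :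
    Submodule.span ℚ (Set.range (algebraMap (𝓞 K) K)) = ⊤ := by
  rw [eq_top_iff, ← (integralBasis K).span_eq]
  apply Submodule.span_mono
  rintro _ ⟨i, rfl⟩
  exact ⟨RingOfIntegers.basis K i, (integralBasis_apply K i).symm⟩

lemma span_range_comp' {R M N ι : Type*} [CommRing R] [AddCommGroup M] [AddCommGroup N]
    [Module R M] [Module R N] (f : M →ₗ[R] N) (v : ι → M) :
    Submodule.span R (Set.range (⇑f ∘ v)) = Submodule.map f (Submodule.span R (Set.range v)) := by
  rw [Set.range_comp, Submodule.span_image]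

set_option maxHeartbeats 1000000 in
set_option synthInstance.maxHeartbeats 400000 in
/-- For a Galois number field `K` of degree `d` with cyclic Galois group generated by
`σ`, the lattice `Λ_K = Σ(𝓞_K)` is simple cyclic (the `ℤ`-span of the rotation shifts
of a single vector) if and only if `K` has a normal integral basis, i.e. there is
`θ ∈ 𝓞_K` whose conjugates `σ⁰(θ), …, σ^{d-1}(θ)` form a `ℤ`-basis of `𝓞_K`. -/
theorem latticeK_simpleCyclic_iff_normal_integral_basis (K : IntermediateField ℚ ℂ)
    [NumberField K] [IsGalois ℚ K] (d : ℕ) (hd : d = Module.finrank ℚ K)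
    (σ : K ≃ₐ[ℚ] K) (hσ : ∀ g : K ≃ₐ[ℚ] K, g ∈ Subgroup.zpowers σ) :
    (∃ x ∈ latticeKgen K d σ,
        (Submodule.span ℤ (Set.range fun k : Fin d => (rotShiftC d)^[k] x) :
          Set (Fin d → ℂ)) = latticeKgen K d σ) ↔
      (∃ θ : 𝓞 K, ∃ b : Module.Basis (Fin d) ℤ (𝓞 K),
        ∀ j : Fin d,
          algebraMap (𝓞 K) K (b j) = (σ ^ (j : ℕ)) (algebraMap (𝓞 K) K θ)) := by
  have hd0 : 0 < d := hd ▸ Module.finrank_pos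
  have h1 : σ ^ d = 1 := by
    rw [hd, ← IsGalois.card_aut_eq_finrank ℚ K]
    exact pow_card_eq_one'
  set L : K →ₗ[ℤ] (Fin d → ℂ) := (embGenHom K d σ).toIntLinearMap with hLdef
  have hLemb : ∀ α : K, L α = embGen K d σ α := fun _ => rfl
  have hLinj : Function.Injective L := embGen_injective K d σ hd0
  set A : 𝓞 K →ₗ[ℤ] K :=
    ((algebraMap (𝓞 K) K : 𝓞 K →+* K).toIntAlgHom).toLinearMap with hAdef
  have hAapp : ∀ t : 𝓞 K, A t = algebraMap (𝓞 K) K t := fun _ => rfl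
  have hAinj : Function.Injective A := fun a b h => by
    exact RingOfIntegers.coe_injective h
  have hrangeA : (LinearMap.range A : Set K) = Set.range (algebraMap (𝓞 K) K) := by
    ext x
    simp [A, LinearMap.mem_range, Set.mem_range]
  have hΛ : latticeKgen K d σ = (Submodule.map L (LinearMap.range A) : Set (Fin d → ℂ)) := by
    rw [latticeKgen, ← hrangeA, Submodule.map_coe]
    rfl
  constructor
  · rintro ⟨_, ⟨_, ⟨θ, rfl⟩, rfl⟩, hspan⟩
    set c : Fin d → 𝓞 K := fun k => galRestrict ℤ ℚ K (𝓞 K) (σ ^ (k : ℕ)) θ with hc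
    have hAc : ∀ k : Fin d, A (c k) = (σ ^ (k : ℕ)) (algebraMap (𝓞 K) K θ) := fun k =>
      algebraMap_galRestrict_apply ℤ (σ ^ (k : ℕ)) θ
    have hrot : (fun k : Fin d =>
        (rotShiftC d)^[k] (embGen K d σ (algebraMap (𝓞 K) K θ))) = L ∘ (A ∘ c) := by
      funext k
      rw [rot_iter_embGen K d σ hd0 h1]
      exact (hLemb _).symm.trans (congrArg L (hAc k).symm)
    rw [hrot, hΛ] at hspan
    have hspan2 : Submodule.span ℤ (Set.range (⇑L ∘ ⇑A ∘ c)) =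
        Submodule.map L (LinearMap.range A) := SetLike.coe_injective hspan
    have hcomp : (⇑L ∘ ⇑A ∘ c) = ⇑(L ∘ₗ A) ∘ c := by
      rw [LinearMap.coe_comp]
      rfl
    rw [hcomp, span_range_comp', Submodule.map_comp] at hspan2
    have hspanZ : Submodule.map A (Submodule.span ℤ (Set.range c)) = LinearMap.range A :=
      Submodule.map_injective_of_injective hLinj hspan2
    have hspanc : Submodule.span ℤ (Set.range c) = ⊤ := by
      apply Submodule.map_injective_of_injective hAinj
      rw [Submodule.map_top, hspanZ]
    have hcard : Fintype.card (Fin d) = Module.finrank ℚ K := by simp [hd]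
    have hspanQ : ⊤ ≤ Submodule.span ℚ (Set.range (⇑A ∘ c)) := by
      rw [← span_range_algebraMap_eq_top K]
      apply Submodule.span_le.2
      rintro _ ⟨t, rfl⟩
      have ht : t ∈ Submodule.span ℤ (Set.range c) := hspanc ▸ Submodule.mem_top
      have h2 : A t ∈ Submodule.map A (Submodule.span ℤ (Set.range c)) :=
        Submodule.mem_map_of_mem ht
      rw [← span_range_comp'] at h2
      exact Submodule.span_subset_span ℤ ℚ _ h2
    have hindQ : LinearIndependent ℚ (⇑A ∘ c) :=
      linearIndependent_of_top_le_span_of_card_eq_finrank hspanQ hcard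
    have hindZ : LinearIndependent ℤ (⇑A ∘ c) := by
      apply hindQ.restrict_scalars
      intro r s h
      have : ((r : ℚ)) = ((s : ℚ)) := by simpa using h
      exact_mod_cast this
    have hindc : LinearIndependent ℤ c := hindZ.of_comp A
    refine ⟨θ, Module.Basis.mk hindc (by rw [hspanc]), fun j => ?_⟩
    rw [Module.Basis.mk_apply]
    exact hAc j
  · rintro ⟨θ, b, hb⟩
    refine ⟨embGen K d σ (algebraMap (𝓞 K) K θ),
      ⟨algebraMap (𝓞 K) K θ, ⟨θ, rfl⟩, rfl⟩, ?_⟩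
    have hrot : (fun k : Fin d =>
        (rotShiftC d)^[k] (embGen K d σ (algebraMap (𝓞 K) K θ))) = (L ∘ₗ A) ∘ b := by
      funext k
      rw [rot_iter_embGen K d σ hd0 h1, ← hb k]
      rfl
    rw [hrot, hΛ, Set.range_comp]
    rw [Submodule.span_image, b.span_eq, Submodule.map_top, LinearMap.range_comp]
end
end

section
/- Let p be an odd prime, let ζ_p = e^{2πi/p} ∈ ℂ, K = ℚ(ζ_p), and d = p − 1. The Galois group Gal(K/ℚ) is cyclic; let σ be a generator and define Σ : K → (Fin d → ℂ) by Σ(α)(j) = σ^{−j}(α). Then the cyclotomic lattice Λ_K = Σ(𝓞_K) is simple cyclic, generated by the rotation shifts of Σ(ζ_p): Λ_K = span_ℤ{Σ(ζ_p), ρ(Σ(ζ_p)), …, ρ^{d−1}(Σ(ζ_p))}. -/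
set_option maxHeartbeats 1000000
set_option synthInstance.maxHeartbeats 400000


noncomputable section

open NumberField

/-- The primitive `p`-th root of unity `ζ_p = e^{2πi/p}`. -/
def zetaC (p : ℕ) : ℂ := Complex.exp (2 * Real.pi * Complex.I / p)

/-- The `p`-th cyclotomic field `K = ℚ(ζ_p)` as a subfield of `ℂ`. -/
def cycloField (p : ℕ) : IntermediateField ℚ ℂ := IntermediateField.adjoin ℚ {zetaC p}

/-- `ζ_p` as an element of `ℚ(ζ_p)`. -/
def zetaK (p : ℕ) : cycloField p :=
  ⟨zetaC p, IntermediateField.subset_adjoin ℚ {zetaC p} (Set.mem_singleton _)⟩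

lemma finRotate_symm_val_aux (d : ℕ) (hd : 0 < d) (j : Fin d) :
    ((((finRotate d).symm j : Fin d) : ℕ) + 1) % d = (j : ℕ) := by
  obtain ⟨d', rfl⟩ : ∃ d', d = d' + 1 := ⟨d - 1, by omega⟩
  have h := (finRotate (d' + 1)).apply_symm_apply j
  rw [finRotate_succ_apply] at h
  conv_rhs => rw [← h]
  rw [Fin.val_add, Fin.val_one']
  rcases Nat.eq_zero_or_pos d' with h0 | h1
  · subst h0; simp [Nat.mod_one]
  · rw [Nat.one_mod_eq_one.mpr (by omega)]

/-- For an odd prime `p`, the cyclotomic lattice `Λ_K` of `K = ℚ(ζ_p)` (of degree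
`d = p - 1`, with cyclic Galois group generated by `σ`, embedded via
`Σ(α)(j) = σ^{-j}(α)`) is simple cyclic, generated by the rotation shifts of `Σ(ζ_p)`. -/
theorem cyclotomic_lattice_simpleCyclic (p : ℕ) (hp : p.Prime) (hodd : Odd p)
    (σ : cycloField p ≃ₐ[ℚ] cycloField p)
    (hσ : ∀ g : cycloField p ≃ₐ[ℚ] cycloField p, g ∈ Subgroup.zpowers σ) :
    latticeKgen (cycloField p) (p - 1) σ =
      (Submodule.span ℤ (Set.range fun k : Fin (p - 1) =>
          (rotShiftC (p - 1))^[k] (embGen (cycloField p) (p - 1) σ (zetaK p))) :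
        Set (Fin (p - 1) → ℂ)) := by
  have : Fact p.Prime := ⟨hp⟩
  have hζC : IsPrimitiveRoot (zetaC p) p := Complex.isPrimitiveRoot_exp p hp.ne_zero
  have hζK : IsPrimitiveRoot (zetaK p) p :=
    IsPrimitiveRoot.coe_submonoidClass_iff.mp hζC
  have hint : IsIntegral ℚ (zetaC p) := (hζC.isIntegral hp.pos).tower_top
  have hsub : Algebra.adjoin ℚ {zetaC p} = (cycloField p).toSubalgebra :=
    (IntermediateField.adjoin_simple_toSubalgebra_of_isAlgebraic hint.isAlgebraic).symm
  haveI : NeZero p := ⟨hp.ne_zero⟩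
  haveI hc1 : IsCyclotomicExtension {p} ℚ (Algebra.adjoin ℚ {zetaC p}) :=
    hζC.adjoin_isCyclotomicExtension ℚ (n := p)
  haveI hcyc : IsCyclotomicExtension {p} ℚ (cycloField p) :=
    IsCyclotomicExtension.equiv _ ℚ _ (Subalgebra.equivOfEq _ _ hsub)
  haveI : FiniteDimensional ℚ (cycloField p) :=
    IsCyclotomicExtension.finiteDimensional {p} ℚ (cycloField p)
  haveI : IsGalois ℚ (cycloField p) := IsCyclotomicExtension.isGalois {p} ℚ (cycloField p)
  have hirr : Irreducible (Polynomial.cyclotomic p ℚ) :=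
    Polynomial.cyclotomic.irreducible_rat hp.pos
  have hfr : Module.finrank ℚ (cycloField p) = p - 1 := by
    rw [IsCyclotomicExtension.finrank (n := p) (cycloField p) hirr]
    exact Nat.totient_prime hp
  have hcard : Fintype.card (cycloField p ≃ₐ[ℚ] cycloField p) = p - 1 := by
    rw [← Nat.card_eq_fintype_card, IsGalois.card_aut_eq_finrank, hfr]
  have hd1 : 1 ≤ p - 1 := Nat.le_sub_one_of_lt hp.one_lt
  have htop : Subgroup.zpowers σ = ⊤ := by
    rw [Subgroup.eq_top_iff']; exact hσ
  have hord : orderOf σ = p - 1 := by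
    rw [← Nat.card_zpowers, htop, Subgroup.card_top, Nat.card_eq_fintype_card, hcard]
  have hζKn : IsPrimitiveRoot (zetaK p) p := hζK
  have hbij : Function.Bijective (hζKn.autToPow ℚ) := by
    rw [Fintype.bijective_iff_injective_and_card]
    refine ⟨hζKn.autToPow_injective ℚ, ?_⟩
    rw [hcard, ZMod.card_units_eq_totient]
    exact (Nat.totient_prime hp).symm
  have hach : ∀ a : ℕ, 1 ≤ a → a < p →
      ∃ k : Fin (p - 1), (σ ^ (k : ℕ)) (zetaK p) = (zetaK p) ^ a := by
    intro a ha1 hap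
    have hcop : a.Coprime p :=
      (hp.coprime_iff_not_dvd.mpr (Nat.not_dvd_of_pos_of_lt ha1 hap)).symm
    obtain ⟨f, hf⟩ := hbij.2 (ZMod.unitOfCoprime a hcop)
    have hspec := hζKn.autToPow_spec ℚ f
    rw [hf] at hspec
    have hval : ((ZMod.unitOfCoprime a hcop : ZMod p)).val = a := by
      simp [ZMod.unitOfCoprime, ZMod.val_cast_of_lt hap]
    rw [hval] at hspec
    obtain ⟨m, hm⟩ := hσ f
    change σ ^ m = f at hm
    have h0 : (0:ℤ) < ((p - 1 : ℕ) : ℤ) := by exact_mod_cast hd1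
    set r : ℤ := m % ((p - 1 : ℕ) : ℤ) with hr
    have hrnn : 0 ≤ r := Int.emod_nonneg m (ne_of_gt h0)
    have hrlt : r < ((p - 1 : ℕ) : ℤ) := Int.emod_lt_of_pos m h0
    have hlt : r.toNat < p - 1 := by omega
    have hfk : σ ^ (r.toNat : ℕ) = f := by
      rw [← hm, ← zpow_natCast, Int.toNat_of_nonneg hrnn, hr, ← hord, zpow_mod_orderOf]
    exact ⟨⟨r.toNat, hlt⟩, by rw [Fin.val_mk, hfk, ← hspec]⟩
  -- integrality of the orbit elements
  have hintpow : ∀ x : cycloField p, x ^ p = 1 → IsIntegral ℤ x := by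
    intro x hx
    refine ⟨Polynomial.X ^ p - 1, ?_, ?_⟩
    · simpa using Polynomial.monic_X_pow_sub_C (1 : ℤ) hp.ne_zero
    · simp [Polynomial.eval₂_sub, hx]
  have hσint : ∀ k : ℕ, IsIntegral ℤ ((σ ^ k) (zetaK p)) := by
    intro k
    refine hintpow _ ?_
    rw [← map_pow, hζK.pow_eq_one, map_one]
  -- integral closure is ℤ[ζ]
  haveI : Fact (Nat.Prime ((⟨p, hp.pos⟩ : ℕ+) : ℕ)) := ⟨hp⟩
  haveI hic : IsIntegralClosure (Algebra.adjoin ℤ ({zetaK p} : Set (cycloField p))) ℤ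
      (cycloField p) :=
    IsCyclotomicExtension.Rat.isIntegralClosure_adjoin_singleton_of_prime
      (p := p) (hp := ⟨hp⟩) hζKn
  -- the key span equality inside K
  have hspan : ((Submodule.span ℤ
        (Set.range fun k : Fin (p - 1) => (σ ^ (k : ℕ)) (zetaK p))) : Set (cycloField p)) =
      {x : cycloField p | IsIntegral ℤ x} := by
    apply subset_antisymm
    · intro x hx
      have hle : Submodule.span ℤ (Set.range fun k : Fin (p - 1) => (σ ^ (k : ℕ)) (zetaK p)) ≤
          Subalgebra.toSubmodule (integralClosure ℤ (cycloField p)) := by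
        rw [Submodule.span_le]
        rintro _ ⟨k, rfl⟩
        exact hσint k
      exact hle hx
    · intro x hx
      obtain ⟨y, hy⟩ := hic.isIntegral_iff.mp hx
      have hxadj : x ∈ Algebra.adjoin ℤ ({zetaK p} : Set (cycloField p)) := hy ▸ y.2
      have hpows : ∀ m : ℕ, (zetaK p) ^ m ∈
          Submodule.span ℤ (Set.range fun k : Fin (p - 1) => (σ ^ (k : ℕ)) (zetaK p)) := by
        intro m
        have horder : orderOf (zetaK p) = p := hζK.eq_orderOf.symm
        have hmm := pow_mod_orderOf (zetaK p) m
        rw [horder] at hmm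
        rw [← hmm]
        rcases Nat.eq_zero_or_pos (m % p) with h0 | h1
        · rw [h0, pow_zero]
          have hone : (1 : cycloField p) = - ∑ a ∈ Finset.Ico 1 p, (zetaK p) ^ a := by
            have hs := hζK.geom_sum_eq_zero hp.one_lt
            rw [Finset.range_eq_Ico, Finset.sum_eq_sum_Ico_succ_bot hp.pos] at hs
            rw [pow_zero] at hs
            linear_combination hs
          rw [hone]
          refine neg_mem (Submodule.sum_mem _ ?_)
          intro a ha
          rw [Finset.mem_Ico] at ha
          obtain ⟨k, hk⟩ := hach a ha.1 ha.2
          exact hk ▸ Submodule.subset_span ⟨k, rfl⟩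
        · obtain ⟨k, hk⟩ := hach (m % p) h1 (Nat.mod_lt m hp.pos)
          exact hk ▸ Submodule.subset_span ⟨k, rfl⟩
      have := Algebra.adjoin_eq_span ℤ ({zetaK p} : Set (cycloField p))
      have hxspan : x ∈ Submodule.span ℤ
          (Submonoid.closure ({zetaK p} : Set (cycloField p)) : Set (cycloField p)) := by
        rw [← this]; exact hxadj
      have hle : Submodule.span ℤ
            (Submonoid.closure ({zetaK p} : Set (cycloField p)) : Set (cycloField p)) ≤
          Submodule.span ℤ (Set.range fun k : Fin (p - 1) => (σ ^ (k : ℕ)) (zetaK p)) := by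
        rw [Submodule.span_le]
        intro y hy
        obtain ⟨m, rfl⟩ := Submonoid.mem_closure_singleton.mp hy
        exact hpows m
      exact hle hxspan
  -- the embedding as an additive (ℤ-linear) map
  let L : cycloField p →+ (Fin (p - 1) → ℂ) :=
    { toFun := embGen (cycloField p) (p - 1) σ
      map_zero' := by funext j; simp [embGen]
      map_add' := by intro a b; funext j; simp [embGen] }
  have hLcoe : embGen (cycloField p) (p - 1) σ = ⇑L.toIntLinearMap := rfl
  -- rotation intertwines with σ
  have hrot1 : ∀ α : cycloField p,
      rotShiftC (p - 1) (embGen (cycloField p) (p - 1) σ α) =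
        embGen (cycloField p) (p - 1) σ (σ α) := by
    intro α
    funext j
    simp only [rotShiftC, embGen]
    have hval := finRotate_symm_val_aux (p - 1) hd1 j
    have hmodeq : (-((((finRotate (p - 1)).symm j : Fin (p - 1)) : ℕ) : ℤ)) ≡
        1 - ((j : ℕ) : ℤ) [ZMOD ((p - 1 : ℕ) : ℤ)] := by
      have h3 : (j : ℕ) < p - 1 := j.isLt
      have h1' : ((((finRotate (p - 1)).symm j : Fin (p - 1)) : ℕ) + 1) % (p - 1)
          = (j : ℕ) % (p - 1) := by rw [hval, Nat.mod_eq_of_lt h3]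
      have h5 : Int.ModEq ((p - 1 : ℕ) : ℤ)
          (((((finRotate (p - 1)).symm j : Fin (p - 1)) : ℕ) : ℤ) + 1) ((j : ℕ) : ℤ) := by
        have hc := congrArg (fun t : ℕ => (t : ℤ)) h1'
        push_cast at hc
        exact hc
      have h6 := (Int.ModEq.refl 1).sub h5
      have h7 : (1 : ℤ) - ((((((finRotate (p - 1)).symm j : Fin (p - 1)) : ℕ) : ℤ)) + 1)
          = -(((((finRotate (p - 1)).symm j : Fin (p - 1)) : ℕ)) : ℤ) := by ring
      rw [h7] at h6
      exact h6
    have hzp : σ ^ (-((((finRotate (p - 1)).symm j : Fin (p - 1)) : ℕ) : ℤ)) =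
        σ ^ (1 - ((j : ℕ) : ℤ)) := by
      rw [zpow_eq_zpow_iff_modEq, hord]
      exact hmodeq
    rw [hzp]
    have hsp : σ ^ (1 - ((j : ℕ) : ℤ)) = σ ^ (-((j : ℕ) : ℤ)) * σ := by
      rw [sub_eq_add_neg, add_comm, zpow_add, zpow_one]
    rw [hsp, AlgEquiv.mul_apply]
  have hiter : ∀ (k : ℕ),
      (rotShiftC (p - 1))^[k] (embGen (cycloField p) (p - 1) σ (zetaK p)) =
        embGen (cycloField p) (p - 1) σ ((σ ^ k) (zetaK p)) := by
    intro k
    induction k with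
    | zero => simp
    | succ n ih =>
        rw [Function.iterate_succ_apply', ih, hrot1, ← AlgEquiv.mul_apply, ← pow_succ']
  have hrange : Set.range (algebraMap (𝓞 (cycloField p)) (cycloField p)) =
      {x : cycloField p | IsIntegral ℤ x} := by
    ext x
    constructor
    · rintro ⟨y, rfl⟩
      exact y.isIntegral_coe
    · intro hx
      exact ⟨⟨x, hx⟩, rfl⟩
  have hgen : (Set.range fun k : Fin (p - 1) =>
      (rotShiftC (p - 1))^[(k : ℕ)] (embGen (cycloField p) (p - 1) σ (zetaK p))) =
      Set.range (⇑L.toIntLinearMap ∘ fun k : Fin (p - 1) => (σ ^ (k : ℕ)) (zetaK p)) := by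
    apply congrArg Set.range
    funext k
    rw [hiter]
    rfl
  show embGen (cycloField p) (p - 1) σ ''
      Set.range (algebraMap (𝓞 (cycloField p)) (cycloField p)) = _
  rw [hrange, ← hspan, hgen, Set.range_comp, ← Submodule.map_span, hLcoe]
  exact (Submodule.map_coe _ _).symm

end
end
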